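/- arXiv:1910.06214 — 4 statements merged into one kernel-verified Lean document; each statement's English description precedes it below -/
import Mathlib

section
/- Let F_n be the free group on x_1,…,x_n and E the Magnus expansion. Call a monomial X_{i_1}⋯X_{i_m} repeated if i_j = i_k for some j ≠ k. Then for any j ∈ {1,…,n} and any w ∈ F_n, every monomial with nonzero coefficient in E([x_j, w^{-1} x_j w]) − 1 is a repeated monomial (each such monomial contains the variable X_j at least twice). -/
/-- Coefficient function of the Magnus expansion of a single letter `x_i^{±1}`:
`x_i ↦ 1 + X_i` and `x_i⁻¹ ↦ 1 - X_i + X_i² - ⋯`. -/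
def genCoeff {n : ℕ} (i : Fin n) (b : Bool) (l : List (Fin n)) : ℤ :=
  if b then (if l = [] ∨ l = [i] then 1 else 0)
  else (if l.all (· = i) then (-1) ^ l.length else 0)

/-- Convolution product on coefficient functions of noncommutative power series. -/
def conv {n : ℕ} (f g : List (Fin n) → ℤ) (l : List (Fin n)) : ℤ :=
  ∑ k ∈ Finset.range (l.length + 1), f (l.take k) * g (l.drop k)

/-- Coefficients of the Magnus expansion of a word in the letters `x_i^{±1}`. -/
def wordCoeff {n : ℕ} : List (Fin n × Bool) → List (Fin n) → ℤ
  | [] => fun l => if l = [] then 1 else 0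
  | p :: rest => conv (genCoeff p.1 p.2) (wordCoeff rest)

/-- `magnus w l` is the coefficient of the noncommutative monomial `X_{l}` in the
Magnus expansion `E(w) ∈ ℤ⟨⟨X_1,…,X_n⟩⟩` of the free group element `w`. -/
def magnus {n : ℕ} (w : FreeGroup (Fin n)) (l : List (Fin n)) : ℤ :=
  wordCoeff w.toWord l

namespace MagnusAux

variable {n : ℕ}

def delta : List (Fin n) → ℤ := fun l => if l = [] then 1 else 0

lemma wordCoeff_nil : wordCoeff ([] : List (Fin n × Bool)) = delta := rfl

lemma conv_nil (f g : List (Fin n) → ℤ) : conv f g [] = f [] * g [] := by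
  simp [conv]

lemma conv_cons (f g : List (Fin n) → ℤ) (a : Fin n) (l : List (Fin n)) :
    conv f g (a :: l) = f [] * g (a :: l) + conv (fun t => f (a :: t)) g l := by
  unfold conv
  rw [show (a::l).length + 1 = (l.length + 1) + 1 from rfl, Finset.sum_range_succ']
  simp [add_comm]

lemma conv_zero_left (g : List (Fin n) → ℤ) : conv (fun _ => 0) g = fun _ => 0 := by
  funext l; simp [conv]

lemma conv_neg_left (f g : List (Fin n) → ℤ) (l : List (Fin n)) :
    conv (fun t => -(f t)) g l = -(conv f g l) := by
  simp [conv]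

lemma conv_add_left (p q g : List (Fin n) → ℤ) (l : List (Fin n)) :
    conv (fun t => p t + q t) g l = conv p g l + conv q g l := by
  simp [conv, add_mul, Finset.sum_add_distrib]

lemma conv_add_right (f p q : List (Fin n) → ℤ) (l : List (Fin n)) :
    conv f (fun t => p t + q t) l = conv f p l + conv f q l := by
  simp [conv, mul_add, Finset.sum_add_distrib]

lemma conv_const_mul_left (c : ℤ) (p g : List (Fin n) → ℤ) (l : List (Fin n)) :
    conv (fun t => c * p t) g l = c * conv p g l := by
  simp [conv, Finset.mul_sum, mul_assoc]

lemma conv_delta_left (g : List (Fin n) → ℤ) : conv delta g = g := by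
  funext l
  cases l with
  | nil => simp [conv_nil, delta]
  | cons a t =>
    rw [conv_cons]
    have : (fun s => delta (a :: s) : List (Fin n) → ℤ) = fun _ => 0 := by
      funext s; simp [delta]
    rw [this, conv_zero_left]
    simp [delta]

lemma conv_delta_right (f : List (Fin n) → ℤ) : conv f delta = f := by
  funext l
  unfold conv
  rw [Finset.sum_range_succ]
  have h1 : ∀ k ∈ Finset.range l.length, f (l.take k) * delta (l.drop k) = 0 := by
    intro k hk
    rw [Finset.mem_range] at hk
    have : l.drop k ≠ [] := by
      simp [List.drop_eq_nil_iff]; omega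
    simp [delta, this]
  rw [Finset.sum_eq_zero h1]
  simp [delta]

lemma conv_assoc (f g h : List (Fin n) → ℤ) : conv (conv f g) h = conv f (conv g h) := by
  funext l
  induction l generalizing f with
  | nil => simp [conv_nil, mul_assoc]
  | cons a t ih =>
    rw [conv_cons, conv_cons, conv_cons]
    have e1 : (fun s => conv f g (a :: s) : List (Fin n) → ℤ)
        = fun s => f [] * g (a :: s) + conv (fun u => f (a :: u)) g s := by
      funext s; rw [conv_cons]
    rw [e1]
    rw [conv_add_left]
    rw [conv_const_mul_left]
    rw [ih (fun u => f (a :: u)), conv_nil]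
    ring

lemma wordCoeff_append (u v : List (Fin n × Bool)) :
    wordCoeff (u ++ v) = conv (wordCoeff u) (wordCoeff v) := by
  induction u with
  | nil => rw [List.nil_append, wordCoeff_nil, conv_delta_left]
  | cons p rest ih =>
    show wordCoeff (p :: (rest ++ v)) = _
    rw [show wordCoeff (p :: (rest ++ v)) = conv (genCoeff p.1 p.2) (wordCoeff (rest ++ v)) from rfl,
      ih, ← conv_assoc]
    rfl

lemma conv_cancel (i : Fin n) (b : Bool) :
    conv (genCoeff i b) (genCoeff i (!b)) = delta := by
  cases b with
  | true =>
    funext l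
    cases l with
    | nil => simp [conv_nil, genCoeff, delta]
    | cons a t =>
      rw [conv_cons]
      have e1 : (fun s => genCoeff i true (a :: s) : List (Fin n) → ℤ)
          = if a = i then delta else fun _ => 0 := by
        funext s
        by_cases hai : a = i <;> simp [genCoeff, delta, hai]
      rw [e1]
      by_cases hai : a = i
      · subst hai
        rw [if_pos rfl, conv_delta_left]
        by_cases ht : t.all (· = a)
        · simp [genCoeff, delta, ht, pow_succ]
        · simp [genCoeff, delta, ht]
      · rw [if_neg hai, conv_zero_left]
        simp [genCoeff, delta, hai, Ne.symm hai]
  | false =>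
    funext l
    induction l with
    | nil => simp [conv_nil, genCoeff, delta]
    | cons a t ih =>
      rw [conv_cons]
      by_cases hai : a = i
      · subst hai
        have e1 : (fun s => genCoeff a false (a :: s) : List (Fin n) → ℤ)
            = fun s => -(genCoeff a false s) := by
          funext s
          simp only [genCoeff, List.all_cons, List.length_cons]
          by_cases h : s.all (· = a) <;> simp [h, pow_succ, mul_comm]
        rw [e1, conv_neg_left, ih]
        have : genCoeff a false [] = 1 := by simp [genCoeff]
        rw [this]
        by_cases ht : t = [] <;> simp [genCoeff, delta, ht]
      · have e1 : (fun s => genCoeff i false (a :: s) : List (Fin n) → ℤ)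
            = fun _ => 0 := by
          funext s; simp [genCoeff, hai]
        rw [e1, conv_zero_left]
        simp [genCoeff, delta, hai, Ne.symm hai]

lemma wordCoeff_step {L₁ L₂ : List (Fin n × Bool)} (h : FreeGroup.Red.Step L₁ L₂) :
    wordCoeff L₁ = wordCoeff L₂ := by
  cases h with
  | @not L₁ L₂ x b =>
    rw [wordCoeff_append, wordCoeff_append]
    have key : wordCoeff ((x,b)::(x,!b)::L₂) = wordCoeff L₂ := by
      rw [show wordCoeff ((x,b)::(x,!b)::L₂)
          = conv (genCoeff x b) (conv (genCoeff x (!b)) (wordCoeff L₂)) from rfl,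
        ← conv_assoc, conv_cancel, conv_delta_left]
    rw [key]

lemma wordCoeff_red {L₁ L₂ : List (Fin n × Bool)} (h : FreeGroup.Red L₁ L₂) :
    wordCoeff L₁ = wordCoeff L₂ := by
  induction h with
  | refl => rfl
  | tail _ step ih => exact ih.trans (wordCoeff_step step)

lemma magnus_mul (u v : FreeGroup (Fin n)) :
    magnus (u * v) = conv (magnus u) (magnus v) := by
  have h : u * v = FreeGroup.mk (u.toWord ++ v.toWord) := by
    rw [← FreeGroup.mul_mk, FreeGroup.mk_toWord, FreeGroup.mk_toWord]
  unfold magnus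
  rw [h, FreeGroup.toWord_mk, ← wordCoeff_red (FreeGroup.reduce.red), wordCoeff_append]

lemma magnus_one : magnus (1 : FreeGroup (Fin n)) = delta := by
  funext l; simp [magnus, FreeGroup.toWord_one]; rfl

lemma magnus_of (j : Fin n) : magnus (FreeGroup.of j) = genCoeff j true := by
  funext l
  show wordCoeff [(j, true)] l = _
  rw [show wordCoeff [(j,true)] = conv (genCoeff j true) (wordCoeff []) from rfl,
    wordCoeff_nil, conv_delta_right]

lemma conv_count {j : Fin n} {k m : ℕ} {f g : List (Fin n) → ℤ}
    (hf : ∀ t, f t ≠ 0 → k ≤ t.count j) (hg : ∀ t, g t ≠ 0 → m ≤ t.count j) :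
    ∀ t, conv f g t ≠ 0 → k + m ≤ t.count j := by
  intro t ht
  unfold conv at ht
  obtain ⟨i, _, hne⟩ := Finset.exists_ne_zero_of_sum_ne_zero ht
  have h1 : f (t.take i) ≠ 0 := fun h => hne (by simp [h])
  have h2 : g (t.drop i) ≠ 0 := fun h => hne (by simp [h])
  have c1 := hf _ h1
  have c2 := hg _ h2
  have hc : (t.take i).count j + (t.drop i).count j = t.count j := by
    rw [← List.count_append, List.take_append_drop]
  omega

lemma count_trivial {j : Fin n} (f : List (Fin n) → ℤ) :
    ∀ t, f t ≠ 0 → 0 ≤ t.count j := fun _ _ => Nat.zero_le _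

def Aa (j : Fin n) : List (Fin n) → ℤ :=
  fun t => magnus (FreeGroup.of j) t - delta t

def Bb (j : Fin n) (w : FreeGroup (Fin n)) : List (Fin n) → ℤ :=
  fun t => magnus (w⁻¹ * FreeGroup.of j * w) t - delta t

def Dd (j : Fin n) (w : FreeGroup (Fin n)) : List (Fin n) → ℤ :=
  fun t => conv (Aa j) (Bb j w) t - conv (Bb j w) (Aa j) t

lemma ha_split (j : Fin n) : magnus (FreeGroup.of j) = fun s => delta s + Aa j s := by
  funext s; simp [Aa]

lemma hG_split (j : Fin n) (w : FreeGroup (Fin n)) :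
    magnus (w⁻¹ * FreeGroup.of j * w) = fun s => delta s + Bb j w s := by
  funext s; simp [Bb]

lemma inv_conv (u : FreeGroup (Fin n)) : conv (magnus u⁻¹) (magnus u) = delta := by
  rw [← magnus_mul, inv_mul_cancel, magnus_one]

lemma hA_count (j : Fin n) : ∀ t, Aa j t ≠ 0 → 1 ≤ t.count j := by
  intro t ht
  by_cases h0 : t = []
  · exfalso; apply ht; simp [Aa, magnus_of, genCoeff, delta, h0]
  by_cases h1 : t = [j]
  · subst h1; simp
  · exfalso; apply ht; simp [Aa, magnus_of, genCoeff, delta, h0, h1]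

lemma hB_eq (j : Fin n) (w : FreeGroup (Fin n)) :
    Bb j w = conv (magnus w⁻¹) (conv (Aa j) (magnus w)) := by
  have h1 : magnus (w⁻¹ * FreeGroup.of j * w)
      = conv (magnus w⁻¹) (conv (magnus (FreeGroup.of j)) (magnus w)) := by
    rw [mul_assoc, magnus_mul, magnus_mul]
  have h2 : conv (magnus (FreeGroup.of j)) (magnus w)
      = fun s => magnus w s + conv (Aa j) (magnus w) s := by
    funext s
    rw [ha_split, conv_add_left, conv_delta_left]
  funext t
  have h3 : magnus (w⁻¹ * FreeGroup.of j * w) t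
      = delta t + conv (magnus w⁻¹) (conv (Aa j) (magnus w)) t := by
    rw [h1, h2, conv_add_right, inv_conv]
  simp [Bb, h3]

lemma hB_count (j : Fin n) (w : FreeGroup (Fin n)) :
    ∀ t, Bb j w t ≠ 0 → 1 ≤ t.count j := by
  intro t ht
  rw [hB_eq] at ht
  have := conv_count (j := j) (count_trivial (magnus w⁻¹))
    (conv_count (hA_count j) (count_trivial (magnus w))) t ht
  omega

lemma hD_count (j : Fin n) (w : FreeGroup (Fin n)) :
    ∀ t, Dd j w t ≠ 0 → 2 ≤ t.count j := by
  intro t ht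
  have h : conv (Aa j) (Bb j w) t ≠ 0 ∨ conv (Bb j w) (Aa j) t ≠ 0 := by
    by_contra h
    push_neg at h
    exact ht (by simp [Dd, h.1, h.2])
  rcases h with h | h
  · have := conv_count (hA_count j) (hB_count j w) t h; omega
  · have := conv_count (hB_count j w) (hA_count j) t h; omega

lemma comm_formula (j : Fin n) (w : FreeGroup (Fin n)) :
    ∀ t, magnus ((FreeGroup.of j)⁻¹ * (w⁻¹ * FreeGroup.of j * w)⁻¹ *
        FreeGroup.of j * (w⁻¹ * FreeGroup.of j * w)) t
      = delta t + conv (magnus (FreeGroup.of j)⁻¹)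
          (conv (magnus (w⁻¹ * FreeGroup.of j * w)⁻¹) (Dd j w)) t := by
  intro t
  set a := magnus (FreeGroup.of j) with ha_def
  set G := magnus (w⁻¹ * FreeGroup.of j * w) with hG_def
  set a' := magnus (FreeGroup.of j)⁻¹ with ha'_def
  set G' := magnus (w⁻¹ * FreeGroup.of j * w)⁻¹ with hG'_def
  -- product of four factors
  have hprod : magnus ((FreeGroup.of j)⁻¹ * (w⁻¹ * FreeGroup.of j * w)⁻¹ *
      FreeGroup.of j * (w⁻¹ * FreeGroup.of j * w)) = conv a' (conv G' (conv a G)) := by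
    rw [magnus_mul, magnus_mul, magnus_mul, conv_assoc, conv_assoc]
  -- conv a G = conv G a + Dd
  have cab : ∀ s, conv a (Bb j w) s = Bb j w s + conv (Aa j) (Bb j w) s := by
    intro s
    rw [ha_def, ha_split, conv_add_left, conv_delta_left]
  have caG : ∀ s, conv a G s = a s + Bb j w s + conv (Aa j) (Bb j w) s := by
    intro s
    rw [hG_def, hG_split j w, conv_add_right, conv_delta_right, cab]
    ring
  have cba : ∀ s, conv G (Aa j) s = Aa j s + conv (Bb j w) (Aa j) s := by
    intro s
    rw [hG_def, hG_split j w, conv_add_left, conv_delta_left]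
  have cGa : ∀ s, conv G a s = G s + Aa j s + conv (Bb j w) (Aa j) s := by
    intro s
    rw [ha_def, ha_split j, conv_add_right, conv_delta_right, cba]
    ring
  have hdiff : conv a G = fun s => conv G a s + Dd j w s := by
    funext s
    rw [caG, cGa]
    have e1 : Aa j s = a s - delta s := rfl
    have e2 : Bb j w s = G s - delta s := rfl
    simp only [Dd]
    rw [e1, e2]
    ring
  have step2 : conv G' (conv G a) = a := by
    rw [← conv_assoc, hG'_def, hG_def, inv_conv, conv_delta_left]
  have step1 : conv G' (conv a G) = fun s => a s + conv G' (Dd j w) s := by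
    funext s
    rw [hdiff, conv_add_right, step2]
  have step3 : conv a' (fun s => a s + conv G' (Dd j w) s) t
      = delta t + conv a' (conv G' (Dd j w)) t := by
    rw [conv_add_right]
    rw [ha'_def, ha_def, inv_conv]
  rw [hprod, step1, step3]

end MagnusAux

/-- Every monomial with nonzero coefficient in E([x_j, w⁻¹ x_j w]) - 1
(with [a,b] = a⁻¹b⁻¹ab) contains the variable X_j at least twice. -/
theorem magnus_commutator_repeated {n : ℕ} (j : Fin n) (w : FreeGroup (Fin n)) :
    ∀ l : List (Fin n), l ≠ [] →
      magnus ((FreeGroup.of j)⁻¹ * (w⁻¹ * FreeGroup.of j * w)⁻¹ *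
        FreeGroup.of j * (w⁻¹ * FreeGroup.of j * w)) l ≠ 0 →
      2 ≤ l.count j := by
  intro l hl hne
  open MagnusAux in
  have hform := comm_formula j w l
  have hdelta : delta l = (0 : ℤ) := by simp [MagnusAux.delta, hl]
  rw [hform, hdelta, zero_add] at hne
  have := MagnusAux.conv_count (j := j)
    (MagnusAux.count_trivial (magnus (FreeGroup.of j)⁻¹))
    (MagnusAux.conv_count (MagnusAux.count_trivial (magnus (w⁻¹ * FreeGroup.of j * w)⁻¹))
      (MagnusAux.hD_count j w)) l hne
  omega
end

section
/- Let F_n be the free group on x_1,…,x_n, let λ_i ∈ F_n be a fixed word, and let I = i_1⋯i_m i be a sequence of indices. Define μ(J) for a sequence J = j_1⋯j_s j as the coefficient of X_{j_1}⋯X_{j_s}} in E(λ_j) (when applicable), and let Δ̄(I) be a common divisor of the coefficients μ(i_1⋯i_j i) of X_{i_1}⋯X_{i_j} in E(λ_i) for all 1 ≤ j ≤ m. Then for any x ∈ F_n, the coefficient of X_{i_1}⋯X_{i_m} in E(λ_i x) is congruent to the coefficient of X_{i_1}⋯X_{i_m} in E(x) modulo Δ̄(I). -/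
lemma conv_nil {n : ℕ} (f g : List (Fin n) → ℤ) : conv f g [] = f [] * g [] := by
  simp [conv]

lemma conv_cons {n : ℕ} (f g : List (Fin n) → ℤ) (a : Fin n) (t : List (Fin n)) :
    conv f g (a :: t) =
      f [] * g (a :: t) + ∑ k ∈ Finset.range (t.length + 1), f (a :: t.take k) * g (t.drop k) := by
  simp only [conv, List.length_cons]
  rw [Finset.sum_range_succ']
  simp [add_comm]

lemma conv_delta_left {n : ℕ} (g : List (Fin n) → ℤ) :
    conv (fun l => if l = [] then 1 else 0) g = g := by
  funext l
  cases l with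
  | nil => simp [conv_nil]
  | cons a t => simp [conv_cons]

lemma conv_assoc {n : ℕ} (f g h : List (Fin n) → ℤ) :
    conv (conv f g) h = conv f (conv g h) := by
  funext l
  simp only [conv]
  have L : ∀ i ∈ Finset.range (l.length + 1),
      (∑ k ∈ Finset.range ((l.take i).length + 1), f ((l.take i).take k) * g ((l.take i).drop k)) * h (l.drop i)
      = ∑ k ∈ Finset.range (i + 1), f (l.take k) * (g ((l.take i).drop k) * h (l.drop i)) := by
    intro i hi
    rw [Finset.mem_range] at hi
    rw [List.length_take, min_eq_left (by omega), Finset.sum_mul]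
    refine Finset.sum_congr rfl fun k hk => ?_
    rw [Finset.mem_range] at hk
    rw [List.take_take, min_eq_left (by omega), mul_assoc]
  rw [Finset.sum_congr rfl L]
  have R : ∀ k ∈ Finset.range (l.length + 1),
      f (l.take k) * (∑ j ∈ Finset.range ((l.drop k).length + 1), g ((l.drop k).take j) * h ((l.drop k).drop j))
      = ∑ i ∈ Finset.Ico k (l.length + 1), f (l.take k) * (g ((l.take i).drop k) * h (l.drop i)) := by
    intro k hk
    rw [Finset.mem_range] at hk
    rw [Finset.mul_sum, List.length_drop]
    rw [Finset.sum_Ico_eq_sum_range]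
    refine Finset.sum_congr (by congr 1; omega) fun j hj => ?_
    rw [List.take_drop, List.drop_drop]
  rw [Finset.sum_congr rfl R]
  exact Finset.sum_comm' (by intro i k; simp only [Finset.mem_range, Finset.mem_Ico]; omega)

lemma conv_genTrue_cons {n : ℕ} (i : Fin n) (g : List (Fin n) → ℤ) (a : Fin n)
    (t : List (Fin n)) :
    conv (genCoeff i true) g (a :: t) = g (a :: t) + (if a = i then g t else 0) := by
  rw [conv_cons]
  have h0 : genCoeff i true [] = 1 := by simp [genCoeff]
  rw [h0, one_mul]
  congr 1
  by_cases ha : a = i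
  · subst ha
    simp only [if_pos rfl]
    have key : ∀ k ∈ Finset.range (t.length + 1),
        genCoeff a true (a :: t.take k) * g (t.drop k)
        = (if t.take k = [] then (1:ℤ) else 0) * g (t.drop k) := by
      intro k hk
      congr 1
      simp [genCoeff]
    rw [Finset.sum_congr rfl key]
    rw [Finset.sum_eq_single_of_mem 0 (by simp)]
    · simp
    · intro k hk hk0
      rw [Finset.mem_range] at hk
      have : t.take k ≠ [] := by
        intro h
        rcases List.take_eq_nil_iff.mp h with h | h
        · exact hk0 h
        · subst h; simp at hk; omega
      simp [this]
  · simp only [if_neg ha]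
    rw [Finset.sum_eq_zero]
    intro k hk
    have : genCoeff i true (a :: t.take k) = 0 := by
      simp only [genCoeff, if_pos]
      rw [if_neg]
      rintro (h | h) <;> simp_all
    rw [this, zero_mul]

lemma conv_genFalse_cons {n : ℕ} (i : Fin n) (g : List (Fin n) → ℤ) (a : Fin n)
    (t : List (Fin n)) :
    conv (genCoeff i false) g (a :: t) =
      g (a :: t) + (if a = i then -(conv (genCoeff i false) g t) else 0) := by
  rw [conv_cons]
  have h0 : genCoeff i false [] = 1 := by simp [genCoeff]
  rw [h0, one_mul]
  congr 1
  by_cases ha : a = i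
  · subst ha
    simp only [if_pos rfl, conv, neg_eq_iff_eq_neg, ← Finset.sum_neg_distrib]
    refine Finset.sum_congr rfl fun k hk => ?_
    have : genCoeff a false (a :: t.take k) = -(genCoeff a false (t.take k)) := by
      simp only [genCoeff, List.all_cons, List.length_cons, decide_eq_true_eq]
      by_cases h : (t.take k).all (· = a)
      · have hd : decide (a = a) = true := by simp
        simp only [h, hd, Bool.true_and, if_true, List.length_take]
        ring_nf
        simp [pow_succ]
      · simp [h]
    rw [this]
    ring
  · simp only [if_neg ha]
    rw [Finset.sum_eq_zero]
    intro k hk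
    have : genCoeff i false (a :: t.take k) = 0 := by
      simp [genCoeff, ha]
    rw [this, zero_mul]

lemma conv_gen_inv {n : ℕ} (i : Fin n) (b : Bool) :
    conv (genCoeff i b) (genCoeff i (!b)) = (fun l => if l = [] then 1 else 0) := by
  funext l
  induction l with
  | nil => cases b <;> simp [conv_nil, genCoeff]
  | cons a t ih =>
    cases b with
    | true =>
      rw [Bool.not_true, conv_genTrue_cons]
      simp only [List.cons_ne_nil, if_neg, reduceCtorEq]
      by_cases ha : a = i
      · subst ha
        simp only [if_pos rfl, genCoeff, List.all_cons, List.length_cons, decide_eq_true_eq]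
        by_cases h : t.all (· = a)
        · simp [h, pow_succ]
        · simp [h]
      · simp only [if_neg ha, add_zero, genCoeff, List.all_cons, decide_eq_true_eq]
        simp [ha]
    | false =>
      rw [Bool.not_false] at ih ⊢
      rw [conv_genFalse_cons, ih]
      simp only [List.cons_ne_nil, if_neg, reduceCtorEq]
      by_cases ha : a = i
      · subst ha
        simp only [if_pos rfl, genCoeff]
        by_cases h : t = []
        · subst h; simp
        · simp [h]
      · simp [genCoeff, ha]

lemma wordCoeff_append {n : ℕ} (w1 w2 : List (Fin n × Bool)) :
    wordCoeff (w1 ++ w2) = conv (wordCoeff w1) (wordCoeff w2) := by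
  induction w1 with
  | nil => simp [wordCoeff, conv_delta_left]
  | cons p r ih =>
    show conv (genCoeff p.1 p.2) (wordCoeff (r ++ w2)) = _
    rw [ih, ← conv_assoc]
    rfl

lemma wordCoeff_step {n : ℕ} {w1 w2 : List (Fin n × Bool)}
    (h : FreeGroup.Red.Step w1 w2) : wordCoeff w1 = wordCoeff w2 := by
  cases h with
  | @not L1 L2 x b =>
    have key : wordCoeff ((x, b) :: (x, !b) :: L2) = wordCoeff L2 := by
      show conv (genCoeff x b) (conv (genCoeff x (!b)) (wordCoeff L2)) = wordCoeff L2
      rw [← conv_assoc, conv_gen_inv, conv_delta_left]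
    rw [wordCoeff_append, wordCoeff_append, key]

lemma wordCoeff_red {n : ℕ} {w1 w2 : List (Fin n × Bool)}
    (h : FreeGroup.Red w1 w2) : wordCoeff w1 = wordCoeff w2 := by
  induction h with
  | refl => rfl
  | tail _ step ih => rw [ih, wordCoeff_step step]

lemma magnus_mul {n : ℕ} (a b : FreeGroup (Fin n)) :
    magnus (a * b) = conv (magnus a) (magnus b) := by
  have h1 : a * b = FreeGroup.mk (a.toWord ++ b.toWord) := by
    rw [← FreeGroup.mul_mk, FreeGroup.mk_toWord, FreeGroup.mk_toWord]
  have h2 : (a * b).toWord = FreeGroup.reduce (a.toWord ++ b.toWord) := by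
    rw [h1, FreeGroup.toWord_mk]
  funext l
  show wordCoeff (a * b).toWord l = _
  rw [h2, ← wordCoeff_red (FreeGroup.reduce.red), wordCoeff_append]
  rfl

lemma wordCoeff_nil_arg {n : ℕ} (w : List (Fin n × Bool)) : wordCoeff w [] = 1 := by
  induction w with
  | nil => rfl
  | cons p r ih =>
    show conv (genCoeff p.1 p.2) (wordCoeff r) [] = 1
    rw [conv_nil, ih, mul_one]
    cases p.2 <;> simp [genCoeff]

/-- If d divides the coefficient of every prefix monomial X_{i_1}⋯X_{i_j}
(1 ≤ j ≤ m) in E(λ_i), then the coefficients of X_{i_1}⋯X_{i_m} in E(λ_i x)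
and E(x) are congruent modulo d. -/
theorem magnus_mod_indeterminacy {n : ℕ} (lam x : FreeGroup (Fin n))
    (I : List (Fin n)) (d : ℤ)
    (h : ∀ j : ℕ, 1 ≤ j → j ≤ I.length → d ∣ magnus lam (I.take j)) :
    d ∣ (magnus (lam * x) I - magnus x I) := by
  have hm : magnus (lam * x) I
      = ∑ k ∈ Finset.range (I.length + 1), magnus lam (I.take k) * magnus x (I.drop k) := by
    rw [magnus_mul]
    rfl
  rw [hm, Finset.sum_range_succ']
  simp only [List.take_zero, List.drop_zero]
  have h0 : magnus lam [] = 1 := wordCoeff_nil_arg _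
  rw [h0, one_mul, add_sub_cancel_right]
  refine Finset.dvd_sum fun k hk => ?_
  rw [Finset.mem_range] at hk
  exact Dvd.dvd.mul_right (h (k + 1) (by omega) (by omega)) _
end

section
/- Let F_n be the free group on x_1,…,x_n. The reduced free group RF_n, defined as the quotient of F_n by the normal closure of all elements [x_i, w^{-1} x_i w] for i ∈ {1,…,n} and w ∈ F_n, is a nilpotent group of nilpotency class at most n. -/
/-!
Let `A i` be the normal closure of the generator `x i` in `RF n`. The defining relations say
exactly that `x i` commutes with its conjugates, i.e. that `A i` is abelian, and the `A i`
generate `RF n`. In a group generated by abelian normal subgroups `A i`, the `k`-th term of the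
lower central series lies in the join of the intersections `⋂_{i ∈ S} A i` with `#S > k`: the
commutator of such an intersection with `A i` is trivial if `i ∈ S`, because `A i` is abelian,
and lies in `⋂_{j ∈ insert i S} A j` otherwise. With only `n` indices there is no set of size
`n + 1`, so the `n`-th term is trivial.
-/

/-- The set of relators `[x_i, w⁻¹ x_i w]` (with `[a,b] = a⁻¹b⁻¹ab`) in the free group. -/
def redRelators (n : ℕ) : Set (FreeGroup (Fin n)) :=
  {r | ∃ (i : Fin n) (w : FreeGroup (Fin n)),
    r = (FreeGroup.of i)⁻¹ * (w⁻¹ * FreeGroup.of i * w)⁻¹ *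
        FreeGroup.of i * (w⁻¹ * FreeGroup.of i * w)}

/-- The reduced free group `RF_n`. -/
def RF (n : ℕ) := FreeGroup (Fin n) ⧸ Subgroup.normalClosure (redRelators n)

instance (n : ℕ) : Group (RF n) := by unfold RF; infer_instance

open scoped commutatorElement

namespace Subgroup

variable {G : Type*} [Group G]

theorem commutator_iSup_right_le {ι : Sort*} {H L : Subgroup G} [hL : L.Normal]
    {K : ι → Subgroup G} (h : ∀ i, ⁅H, K i⁆ ≤ L) : ⁅H, ⨆ i, K i⁆ ≤ L := by
  rw [commutator_le]
  intro g hg k hk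
  refine iSup_induction K (C := fun k ↦ ⁅g, k⁆ ∈ L) hk
    (fun i k hk ↦ h i (commutator_mem_commutator hg hk)) (by simp) fun x y hx hy ↦ ?_
  rw [commutatorElement_mul_right_eq_mul_conj]
  simpa only [mul_assoc] using mul_mem hx (hL.conj_mem _ hy x)

theorem commutator_iSup_iSup_le {ι κ : Sort*} {L : Subgroup G} [L.Normal]
    {H : ι → Subgroup G} {K : κ → Subgroup G} (h : ∀ i j, ⁅H i, K j⁆ ≤ L) :
    ⁅⨆ i, H i, ⨆ j, K j⁆ ≤ L := by
  refine commutator_iSup_right_le fun j ↦ ?_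
  rw [commutator_comm]
  exact commutator_iSup_right_le fun i ↦ commutator_comm (H i) (K j) ▸ h i j

theorem isMulCommutative_normalClosure_singleton {x : G}
    (h : ∀ y, IsConj x y → Commute x y) : IsMulCommutative (normalClosure {x}) := by
  refine isMulCommutative_closure fun y hy z hz ↦ ?_
  simp only [Group.mem_conjugatesOfSet_iff, Set.mem_singleton_iff, exists_eq_left] at hy hz
  obtain ⟨c, rfl⟩ := isConj_iff.mp hy
  have hconj : IsConj x (c⁻¹ * z * c) := hz.trans (isConj_iff.mpr ⟨c⁻¹, by group⟩)
  have := (h _ hconj).conj c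
  rw [show c * (c⁻¹ * z * c) * c⁻¹ = z by group] at this
  exact this.eq

open Finset in
theorem lowerCentralSeries_iSup_le_iSup_iInf {ι : Type*} (A : ι → Subgroup G)
    [∀ i, (A i).Normal] (hA : ∀ i, IsMulCommutative (A i)) (k : ℕ) :
    (⨆ i, A i).lowerCentralSeries k ≤ ⨆ S : {S : Finset ι // k < #S}, ⨅ i ∈ S.1, A i := by
  classical
  have hnormal (S : Finset ι) : (⨅ i ∈ S, A i).Normal :=
    normal_iInf_normal fun i ↦ normal_iInf_normal fun _ ↦ inferInstance
  induction k with
  | zero =>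
    refine iSup_le fun i ↦ le_iSup_of_le ⟨{i}, by simp⟩ ?_
    simp
  | succ k ih =>
    rw [lowerCentralSeries_succ]
    refine (commutator_mono ih le_rfl).trans (commutator_iSup_iSup_le fun S i ↦ ?_)
    by_cases hi : i ∈ S.1
    · have hS : ⨅ j ∈ S.1, A j ≤ A i := biInf_le A hi
      exact (commutator_mono hS le_rfl).trans <|
        (commutator_self_eq_bot_iff.mpr (hA i)).le.trans bot_le
    · refine commutator_le_inf _ _ |>.trans (le_iSup_of_le ⟨insert i S.1, ?_⟩ ?_)
      · rw [card_insert_of_notMem hi]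
        exact Nat.succ_lt_succ S.2
      · rw [Finset.iInf_insert, inf_comm]

theorem lowerCentralSeries_iSup_card_eq_bot {ι : Type*} [Fintype ι] (A : ι → Subgroup G)
    [∀ i, (A i).Normal] (hA : ∀ i, IsMulCommutative (A i)) :
    (⨆ i, A i).lowerCentralSeries (Fintype.card ι) = ⊥ := by
  have : IsEmpty {S : Finset ι // Fintype.card ι < S.card} :=
    ⟨fun S ↦ S.2.not_ge S.1.card_le_univ⟩
  exact le_bot_iff.mp <| (lowerCentralSeries_iSup_le_iSup_iInf A hA _).trans (iSup_of_empty _).le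

end Subgroup

namespace RF

variable {n : ℕ}

def mk (n : ℕ) : FreeGroup (Fin n) →* RF n := QuotientGroup.mk' _

def of (i : Fin n) : RF n := mk n (FreeGroup.of i)

theorem mk_surjective : Function.Surjective (mk n) := QuotientGroup.mk'_surjective _

theorem closure_range_of : Subgroup.closure (Set.range (of (n := n))) = ⊤ := by
  rw [show Set.range (of (n := n)) = mk n '' Set.range FreeGroup.of from
    Set.range_comp _ _, ← MonoidHom.map_closure, FreeGroup.closure_range_of,
    Subgroup.map_top_of_surjective _ mk_surjective]

theorem commute_of_isConj (i : Fin n) {y : RF n} (hy : IsConj (of i) y) : Commute (of i) y := by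
  obtain ⟨g, rfl⟩ := isConj_iff.mp hy
  obtain ⟨w, hw⟩ := mk_surjective g⁻¹
  rw [← inv_inv g, ← hw, inv_inv]
  have hrel : mk n ((FreeGroup.of i)⁻¹ * (w⁻¹ * FreeGroup.of i * w)⁻¹ *
      FreeGroup.of i * (w⁻¹ * FreeGroup.of i * w)) = 1 :=
    (QuotientGroup.eq_one_iff _).mpr (Subgroup.subset_normalClosure ⟨i, w, rfl⟩)
  simp only [map_mul, map_inv] at hrel
  -- with Mathlib's convention `⁅a, b⁆ = aba⁻¹b⁻¹`, the relator `a⁻¹b⁻¹ab` is `⁅a⁻¹, b⁻¹⁆`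
  rw [← Commute.inv_inv_iff, ← commutatorElement_eq_one_iff_commute, commutatorElement_def,
    inv_inv, inv_inv]
  exact hrel

theorem iSup_normalClosure_of : ⨆ i, Subgroup.normalClosure {of (n := n) i} = ⊤ := by
  rw [eq_top_iff, ← closure_range_of, Subgroup.closure_le, Set.range_subset_iff]
  exact fun i ↦ le_iSup (fun i ↦ Subgroup.normalClosure {of i}) i
    (Subgroup.subset_normalClosure rfl)

end RF

/-- The reduced free group RF_n is nilpotent of class at most n: Γ_{n+1}(RF_n) = 1. -/
theorem RF_nilpotent (n : ℕ) : (⊤ : Subgroup (RF n)).lowerCentralSeries n = ⊥ := by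
  have hA (i : Fin n) : IsMulCommutative (Subgroup.normalClosure {RF.of i}) :=
    Subgroup.isMulCommutative_normalClosure_singleton fun _ ↦ RF.commute_of_isConj i
  have := Subgroup.lowerCentralSeries_iSup_card_eq_bot _ hA
  rwa [RF.iSup_normalClosure_of, Fintype.card_fin] at this
end

section
/- Let G be a finitely generated nilpotent group generated by elements g_1,…,g_n, and suppose φ : G → G is an endomorphism such that for each i, φ(g_i) is a conjugate of g_i. Then φ is surjective, and hence φ is an automorphism of G. -/
open scoped commutatorElement

/-- Three subgroups lemma modulo a normal subgroup. -/
lemma three_subgroups_le {G : Type*} [Group G] {H₁ H₂ H₃ N : Subgroup G} [N.Normal]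
    (h1 : ⁅⁅H₂, H₃⁆, H₁⁆ ≤ N) (h2 : ⁅⁅H₃, H₁⁆, H₂⁆ ≤ N) : ⁅⁅H₁, H₂⁆, H₃⁆ ≤ N := by
  let π := QuotientGroup.mk' N
  have key : ∀ {A B C : Subgroup G}, ⁅⁅A, B⁆, C⁆ ≤ N →
      ⁅⁅A.map π, B.map π⁆, C.map π⁆ = ⊥ := by
    intro A B C h
    rw [← Subgroup.map_commutator, ← Subgroup.map_commutator, Subgroup.map_eq_bot_iff,
      QuotientGroup.ker_mk']
    exact h
  have := Subgroup.commutator_commutator_eq_bot_of_rotate (key h1) (key h2)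
  rw [← Subgroup.map_commutator, ← Subgroup.map_commutator, Subgroup.map_eq_bot_iff,
    QuotientGroup.ker_mk'] at this
  exact this

lemma lcs_commutator_le {G : Type*} [Group G] (b a : ℕ) :
    ⁅(⊤ : Subgroup G).lowerCentralSeries a, (⊤ : Subgroup G).lowerCentralSeries b⁆ ≤ (⊤ : Subgroup G).lowerCentralSeries (a + b + 1) := by
  induction b generalizing a with
  | zero =>
    have : (⊤ : Subgroup G).lowerCentralSeries (a + 1) = ⁅(⊤ : Subgroup G).lowerCentralSeries a, ⊤⁆ := rfl
    simp [this]
  | succ b ih =>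
    have hsucc : (⊤ : Subgroup G).lowerCentralSeries (b + 1) = ⁅(⊤ : Subgroup G).lowerCentralSeries b, ⊤⁆ := rfl
    have h1 : ⁅⁅(⊤ : Subgroup G), (⊤ : Subgroup G).lowerCentralSeries a⁆, (⊤ : Subgroup G).lowerCentralSeries b⁆ ≤
        (⊤ : Subgroup G).lowerCentralSeries (a + (b + 1) + 1) := by
      rw [Subgroup.commutator_comm (⊤ : Subgroup G)]
      have : (⊤ : Subgroup G).lowerCentralSeries (a + 1) = ⁅(⊤ : Subgroup G).lowerCentralSeries a, ⊤⁆ := rfl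
      rw [← this]
      have := ih (a + 1)
      convert this using 2
      omega
    have h2 : ⁅⁅(⊤ : Subgroup G).lowerCentralSeries a, (⊤ : Subgroup G).lowerCentralSeries b⁆, (⊤ : Subgroup G)⁆ ≤
        (⊤ : Subgroup G).lowerCentralSeries (a + (b + 1) + 1) := by
      calc ⁅⁅(⊤ : Subgroup G).lowerCentralSeries a, (⊤ : Subgroup G).lowerCentralSeries b⁆, (⊤ : Subgroup G)⁆
          ≤ ⁅(⊤ : Subgroup G).lowerCentralSeries (a + b + 1), (⊤ : Subgroup G)⁆ :=
            Subgroup.commutator_mono (ih a) le_rfl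
        _ = (⊤ : Subgroup G).lowerCentralSeries (a + b + 2) := rfl
        _ = (⊤ : Subgroup G).lowerCentralSeries (a + (b + 1) + 1) := by ring_nf
    have h3 : ⁅⁅(⊤ : Subgroup G).lowerCentralSeries b, (⊤ : Subgroup G)⁆, (⊤ : Subgroup G).lowerCentralSeries a⁆ ≤
        (⊤ : Subgroup G).lowerCentralSeries (a + (b + 1) + 1) := three_subgroups_le h1 h2
    rw [← hsucc] at h3
    calc ⁅(⊤ : Subgroup G).lowerCentralSeries a, (⊤ : Subgroup G).lowerCentralSeries (b + 1)⁆
        = ⁅(⊤ : Subgroup G).lowerCentralSeries (b + 1), (⊤ : Subgroup G).lowerCentralSeries a⁆ := Subgroup.commutator_comm _ _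
      _ ≤ (⊤ : Subgroup G).lowerCentralSeries (a + (b + 1) + 1) := h3

/-- If an endomorphism is the identity modulo the commutator subgroup, then on the `k`-th
lower central series term it is the identity modulo the `(k+1)`-st term. -/
lemma key_step {G : Type*} [Group G] (φ : G →* G)
    (H : ∀ x : G, x⁻¹ * φ x ∈ (⊤ : Subgroup G).lowerCentralSeries 1) :
    ∀ k, ∀ x ∈ (⊤ : Subgroup G).lowerCentralSeries k, x⁻¹ * φ x ∈ (⊤ : Subgroup G).lowerCentralSeries (k + 1) := by
  intro k
  induction k with
  | zero => intro x _; exact H x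
  | succ k ih =>
    set N := (⊤ : Subgroup G).lowerCentralSeries (k + 2) with hN
    let π := QuotientGroup.mk' N
    -- membership criterion
    have hmem : ∀ u : G, π u = 1 ↔ u ∈ N := fun u => QuotientGroup.eq_one_iff u
    -- the equalizer subgroup
    have hgoal : (⊤ : Subgroup G).lowerCentralSeries (k + 1) ≤ MonoidHom.eqLocus (π.comp φ) π := by
      have hdef : (⊤ : Subgroup G).lowerCentralSeries (k + 1) = ⁅(⊤ : Subgroup G).lowerCentralSeries k, (⊤ : Subgroup G)⁆ := rfl
      rw [hdef, Subgroup.commutator_le]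
      intro y hy z _
      -- need : π (φ ⁅y, z⁆) = π ⁅y, z⁆
      show π.comp φ ⁅y, z⁆ = π ⁅y, z⁆
      have ha : y⁻¹ * φ y ∈ (⊤ : Subgroup G).lowerCentralSeries (k + 1) := ih y hy
      have hb : z⁻¹ * φ z ∈ (⊤ : Subgroup G).lowerCentralSeries 1 := H z
      set a := y⁻¹ * φ y with hadef
      set b := z⁻¹ * φ z with hbdef
      have hφy : φ y = y * a := by rw [hadef]; group
      have hφz : φ z = z * b := by rw [hbdef]; group
      -- π a is central
      have hA : ∀ w : G, Commute (π a) (π w) := by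
        intro w
        have : ⁅a, w⁆ ∈ N := by
          have : ⁅a, w⁆ ∈ ⁅(⊤ : Subgroup G).lowerCentralSeries (k + 1), (⊤ : Subgroup G)⁆ :=
            Subgroup.commutator_mem_commutator ha (Subgroup.mem_top w)
          exact this
        have h1 : π ⁅a, w⁆ = 1 := (hmem _).mpr this
        have : ⁅π a, π w⁆ = 1 := by rw [← map_commutatorElement]; exact h1
        exact (commutatorElement_eq_one_iff_commute).mp this
      -- π y commutes with π b
      have hYB : Commute (π y) (π b) := by
        have hyb : ⁅y, b⁆ ∈ N := by
          have h1 : ⁅y, b⁆ ∈ ⁅(⊤ : Subgroup G).lowerCentralSeries k, (⊤ : Subgroup G).lowerCentralSeries 1⁆ :=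
            Subgroup.commutator_mem_commutator hy hb
          have h2 : ⁅(⊤ : Subgroup G).lowerCentralSeries k, (⊤ : Subgroup G).lowerCentralSeries 1⁆ ≤
              (⊤ : Subgroup G).lowerCentralSeries (k + 2) := by
            have := lcs_commutator_le (G := G) 1 k
            convert this using 2
          exact h2 h1
        have h1 : π ⁅y, b⁆ = 1 := (hmem _).mpr hyb
        have : ⁅π y, π b⁆ = 1 := by rw [← map_commutatorElement]; exact h1
        exact (commutatorElement_eq_one_iff_commute).mp this
      -- now compute
      have lhs : π.comp φ ⁅y, z⁆ = ⁅π y * π a, π z * π b⁆ := by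
        simp only [MonoidHom.comp_apply, map_commutatorElement, hφy, hφz, map_mul]
      rw [lhs, map_commutatorElement]
      set Y := π y
      set A := π a
      set Z := π z
      set B := π b
      have hAZ : Commute A Z := hA z
      have hAB : Commute A B := hA b
      have hAY : Commute A Y := hA y
      simp only [commutatorElement_def, mul_inv_rev]
      calc Y * A * (Z * B) * (A⁻¹ * Y⁻¹) * (B⁻¹ * Z⁻¹)
          = Y * (Z * B) * A * (A⁻¹ * Y⁻¹) * (B⁻¹ * Z⁻¹) := by
            rw [mul_assoc Y A, (hAZ.mul_right hAB).eq]; group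
        _ = Y * Z * (B * Y⁻¹) * (B⁻¹ * Z⁻¹) := by group
        _ = Y * Z * (Y⁻¹ * B) * (B⁻¹ * Z⁻¹) := by rw [hYB.inv_left.symm.eq]
        _ = Y * Z * Y⁻¹ * Z⁻¹ := by group
    intro x hx
    have := hgoal hx
    have hx' : π (φ x) = π x := this
    have : π (x⁻¹ * φ x) = 1 := by rw [map_mul, map_inv, hx']; group
    exact (hmem _).mp this

/-- An endomorphism of a finitely generated nilpotent group sending each member of a
generating family to a conjugate of itself is an automorphism. -/
theorem conj_endo_is_aut {G : Type*} [Group G] [Group.IsNilpotent G] {n : ℕ}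
    (g : Fin n → G) (hgen : Subgroup.closure (Set.range g) = ⊤)
    (φ : G →* G) (hφ : ∀ i, ∃ l : G, φ (g i) = l⁻¹ * g i * l) :
    Function.Bijective φ := by
  obtain ⟨c, hc⟩ := nilpotent_iff_lowerCentralSeries.mp ‹Group.IsNilpotent G›
  -- Step 1: every element satisfies x⁻¹ * φ x ∈ commutator subgroup
  have H : ∀ x : G, x⁻¹ * φ x ∈ (⊤ : Subgroup G).lowerCentralSeries 1 := by
    let π := QuotientGroup.mk' ((⊤ : Subgroup G).lowerCentralSeries 1)
    have hloc : (⊤ : Subgroup G) ≤ MonoidHom.eqLocus (π.comp φ) π := by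
      nth_rw 1 [← hgen]
      rw [Subgroup.closure_le]
      rintro _ ⟨i, rfl⟩
      obtain ⟨l, hl⟩ := hφ i
      show π.comp φ (g i) = π (g i)
      have : (g i)⁻¹ * φ (g i) = ⁅(g i)⁻¹, l⁻¹⁆ := by
        rw [hl, commutatorElement_def]; group
      have hmem : (g i)⁻¹ * φ (g i) ∈ (⊤ : Subgroup G).lowerCentralSeries 1 := by
        rw [this]
        have h1 : (⊤ : Subgroup G).lowerCentralSeries 1 = ⁅(⊤ : Subgroup G), (⊤ : Subgroup G)⁆ := rfl
        rw [h1]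
        exact Subgroup.commutator_mem_commutator (Subgroup.mem_top _) (Subgroup.mem_top _)
      have : π ((g i)⁻¹ * φ (g i)) = 1 := (QuotientGroup.eq_one_iff _).mpr hmem
      rw [map_mul, map_inv] at this
      simp only [MonoidHom.comp_apply]
      exact (inv_mul_eq_one.mp this).symm
    intro x
    have hx : π (φ x) = π x := hloc (Subgroup.mem_top x)
    have : π (x⁻¹ * φ x) = 1 := by rw [map_mul, map_inv, hx]; group
    exact (QuotientGroup.eq_one_iff _).mp this
  have key := key_step φ H
  constructor
  · -- injective
    rw [injective_iff_map_eq_one]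
    intro x hx
    have : ∀ m, x ∈ (⊤ : Subgroup G).lowerCentralSeries m := by
      intro m
      induction m with
      | zero => exact Subgroup.mem_top x
      | succ m ih =>
        have := key m x ih
        rw [hx, mul_one] at this
        exact ((⊤ : Subgroup G).lowerCentralSeries (m + 1)).inv_mem_iff.mp this
    have := this c
    rw [hc] at this
    exact this
  · -- surjective
    have surj : ∀ m, ∀ x ∈ (⊤ : Subgroup G).lowerCentralSeries (c - m), ∃ w, φ w = x := by
      intro m
      induction m with
      | zero =>
        intro x hx
        rw [Nat.sub_zero, hc] at hx
        exact ⟨1, by rw [map_one, Subgroup.mem_bot.mp hx]⟩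
      | succ m ih =>
        intro x hx
        have hz : x⁻¹ * φ x ∈ (⊤ : Subgroup G).lowerCentralSeries (c - m) := by
          have h1 := key (c - (m + 1)) x hx
          exact lowerCentralSeries_antitone _ (by omega) h1
        obtain ⟨u, hu⟩ := ih (x⁻¹ * φ x)⁻¹ (((⊤ : Subgroup G).lowerCentralSeries (c - m)).inv_mem hz)
        refine ⟨x * u, ?_⟩
        rw [map_mul, hu]
        group
    intro y
    have : y ∈ (⊤ : Subgroup G).lowerCentralSeries (c - c) := by
      rw [Nat.sub_self]
      exact Subgroup.mem_top y
    exact surj c y this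
end
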